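/- arXiv:2308.05814 — 2 statements merged into one kernel-verified Lean document; each statement's English description precedes it below -/
import Mathlib

section
/- Let A ∈ ℝ^{m×n} with m ≥ n have SVD A = UΣVᵀ partitioned at index k, let Ω ∈ ℝ^{n×ℓ} (k ≤ ℓ ≤ n) be such that Ω̂₁ = V_kᵀΩ has full row rank, and let Q ∈ ℝ^{m×ℓ} be the orthonormal factor produced by randomized subspace iteration with q ≥ 0 steps applied to A and Ω. Then ‖(I − QQᵀ)A‖₂² ≤ ‖Σ⊥‖₂² + γ_k^{4q} · ‖Σ⊥ Ω̂₂ Ω̂₁†‖₂². -/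
/-!
Write `Ω̂₁ = V_kᵀ Ω`, `Ω̂₂ = V⊥ᵀ Ω` and let `P = Ω̂₁†`, so that `Ω̂₁ P = I` by full row rank.
Since `(AAᵀ)^q A = U Σ^{2q+1} Vᵀ`, the matrix `Y P Σ₁^{-2q}` equals `U [Σ₁; E]` with
`E = Σ⊥^{2q} (Σ⊥ Ω̂₂ P) Σ₁^{-2q}`, and its columns lie in the range of `Q`. Subtracting
`U [Σ₁; E] V_kᵀ` from `A` leaves `U [0; Σ⊥ V⊥ᵀ - E V_kᵀ]`; as `I - QQᵀ` is a contraction and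
`U`, `V` have orthonormal columns, `‖(I - QQᵀ)A‖² ≤ ‖[-E, Σ⊥]‖² ≤ ‖Σ⊥‖² + ‖E‖²` by the C*-identity
`‖M‖² = ‖M Mᵀ‖`. Finally the diagonal factors of `E` have norms at most `σ_{k+1}^{2q}` and
`σ_k^{-2q}`, so `‖E‖ ≤ γ_k^{2q} ‖Σ⊥ Ω̂₂ P‖`. Reindexing `Fin n` as `Fin k ⊕ Fin (n - k)` turns the
partitioned SVD into block-matrix algebra.
-/

open MeasureTheory Matrix

noncomputable section

/-- Spectral norm (largest singular value) of a real matrix. -/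
def spec {m n : ℕ} (A : Matrix (Fin m) (Fin n) ℝ) : ℝ :=
  ‖LinearMap.toContinuousLinearMap (Matrix.toEuclideanLin A)‖

/- Moore–Penrose pseudoinverse, via the four Penrose conditions. -/
open scoped Classical in
def pinv {m n : ℕ} (A : Matrix (Fin m) (Fin n) ℝ) : Matrix (Fin n) (Fin m) ℝ :=
  if h : ∃ B : Matrix (Fin n) (Fin m) ℝ,
      A * B * A = A ∧ B * A * B = B ∧ (A * B)ᵀ = A * B ∧ (B * A)ᵀ = B * A
  then h.choose else 0

/-- The first `k` columns of an `n×n` matrix. -/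
def colsLeft {n : ℕ} (k : ℕ) (h : k ≤ n) (V : Matrix (Fin n) (Fin n) ℝ) :
    Matrix (Fin n) (Fin k) ℝ :=
  Matrix.of fun i j => V i (Fin.castLE h j)

/-- The last `n - k` columns of an `n×n` matrix. -/
def colsRight {n : ℕ} (k : ℕ) (V : Matrix (Fin n) (Fin n) ℝ) :
    Matrix (Fin n) (Fin (n - k)) ℝ :=
  Matrix.of fun i j => V i ⟨k + j.1, by have := j.isLt; omega⟩

/-- The trailing diagonal block `Σ⊥ = diag(σ_{k+1},…,σ_n)`. -/
def tailDiag {n : ℕ} (k : ℕ) (σ : Fin n → ℝ) :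
    Matrix (Fin (n - k)) (Fin (n - k)) ℝ :=
  Matrix.diagonal fun j => σ ⟨k + j.1, by have := j.isLt; omega⟩

open scoped Matrix.Norms.L2Operator

lemma spec_eq_l2_opNorm {m n : ℕ} (A : Matrix (Fin m) (Fin n) ℝ) : spec A = ‖A‖ := rfl

namespace Matrix

section L2OpNorm

variable {m n p : Type*} [Fintype m] [Fintype n] [Fintype p]

lemma l2_opNorm_sq_eq_transpose_mul_self [DecidableEq n] (A : Matrix m n ℝ) :
    ‖A‖ ^ 2 = ‖Aᵀ * A‖ := by
  rw [sq, ← l2_opNorm_conjTranspose_mul_self, conjTranspose_eq_transpose_of_trivial]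

lemma l2_opNorm_transpose [DecidableEq m] [DecidableEq n] (A : Matrix m n ℝ) : ‖Aᵀ‖ = ‖A‖ := by
  rw [← conjTranspose_eq_transpose_of_trivial, l2_opNorm_conjTranspose]

lemma l2_opNorm_sq_eq_mul_transpose_self [DecidableEq m] [DecidableEq n] (A : Matrix m n ℝ) :
    ‖A‖ ^ 2 = ‖A * Aᵀ‖ := by
  rw [← l2_opNorm_transpose, l2_opNorm_sq_eq_transpose_mul_self, transpose_transpose]

lemma l2_opNorm_eq_of_transpose_mul_self_eq [DecidableEq n] {A : Matrix m n ℝ}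
    {B : Matrix p n ℝ} (h : Aᵀ * A = Bᵀ * B) : ‖A‖ = ‖B‖ := by
  rw [← sq_eq_sq₀ (norm_nonneg _) (norm_nonneg _), l2_opNorm_sq_eq_transpose_mul_self,
    l2_opNorm_sq_eq_transpose_mul_self, h]

lemma l2_opNorm_eq_of_mul_transpose_self_eq [DecidableEq m] [DecidableEq n] [DecidableEq p]
    {A : Matrix n m ℝ} {B : Matrix n p ℝ} (h : A * Aᵀ = B * Bᵀ) : ‖A‖ = ‖B‖ := by
  rw [← sq_eq_sq₀ (norm_nonneg _) (norm_nonneg _), l2_opNorm_sq_eq_mul_transpose_self,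
    l2_opNorm_sq_eq_mul_transpose_self, h]

lemma l2_opNorm_mul_of_transpose_mul_self_eq_one [DecidableEq n] [DecidableEq p]
    {U : Matrix m p ℝ} (hU : Uᵀ * U = 1) (M : Matrix p n ℝ) : ‖U * M‖ = ‖M‖ :=
  l2_opNorm_eq_of_transpose_mul_self_eq <| by
    rw [transpose_mul, Matrix.mul_assoc, ← Matrix.mul_assoc Uᵀ, hU, Matrix.one_mul]

lemma l2_opNorm_mul_transpose_of_transpose_mul_self_eq_one [DecidableEq m] [DecidableEq n]
    [DecidableEq p] {V : Matrix n p ℝ} (hV : Vᵀ * V = 1) (M : Matrix m p ℝ) :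
    ‖M * Vᵀ‖ = ‖M‖ :=
  l2_opNorm_eq_of_mul_transpose_self_eq <| by
    rw [transpose_mul, transpose_transpose, Matrix.mul_assoc, ← Matrix.mul_assoc Vᵀ, hV,
      Matrix.one_mul]

lemma one_sub_mul_transpose_mul_eq_zero [DecidableEq m] [DecidableEq n] {Q : Matrix m n ℝ}
    (hQ : Qᵀ * Q = 1) : (1 - Q * Qᵀ) * Q = 0 := by
  rw [Matrix.sub_mul, Matrix.one_mul, Matrix.mul_assoc, hQ, Matrix.mul_one, sub_self]

lemma l2_opNorm_one_sub_mul_transpose_le_one [DecidableEq m] [DecidableEq n]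
    {Q : Matrix m n ℝ} (hQ : Qᵀ * Q = 1) : ‖1 - Q * Qᵀ‖ ≤ 1 := by
  have hproj : (1 - Q * Qᵀ)ᵀ * (1 - Q * Qᵀ) = 1 - Q * Qᵀ := by
    rw [transpose_sub, transpose_one, transpose_mul, transpose_transpose, Matrix.mul_sub,
      Matrix.mul_one, ← Matrix.mul_assoc, one_sub_mul_transpose_mul_eq_zero hQ, Matrix.zero_mul,
      sub_zero]
  have h := l2_opNorm_sq_eq_transpose_mul_self (1 - Q * Qᵀ)
  rw [hproj, sq] at h
  nlinarith [norm_nonneg (1 - Q * Qᵀ)]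

lemma l2_opNorm_diagonal_le [DecidableEq n] {f : n → ℝ} {c : ℝ} (hc : 0 ≤ c)
    (hf : ∀ i, |f i| ≤ c) : ‖diagonal f‖ ≤ c := by
  rw [l2_opNorm_diagonal]
  exact pi_norm_le_iff_of_nonneg hc |>.2 fun i => by simpa using hf i

lemma l2_opNorm_fromRows_zero [DecidableEq n] {m₁ m₂ : Type*} [Fintype m₁] [Fintype m₂]
    (M : Matrix m₂ n ℝ) : ‖fromRows (0 : Matrix m₁ n ℝ) M‖ = ‖M‖ :=
  l2_opNorm_eq_of_transpose_mul_self_eq <| by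
    rw [transpose_fromRows, fromCols_mul_fromRows, Matrix.mul_zero, zero_add]

variable {n₁ n₂ : Type*} [Fintype n₁] [Fintype n₂] [DecidableEq n₁] [DecidableEq n₂]

lemma l2_opNorm_fromCols_sq_le [DecidableEq m] (A : Matrix m n₁ ℝ) (B : Matrix m n₂ ℝ) :
    ‖fromCols A B‖ ^ 2 ≤ ‖A‖ ^ 2 + ‖B‖ ^ 2 := by
  rw [l2_opNorm_sq_eq_mul_transpose_self, l2_opNorm_sq_eq_mul_transpose_self A,
    l2_opNorm_sq_eq_mul_transpose_self B, transpose_fromCols, fromCols_mul_fromRows]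
  exact norm_add_le _ _

lemma l2_opNorm_sq_mul_transpose_add_mul_transpose_le [DecidableEq m] [DecidableEq n]
    {V₁ : Matrix n n₁ ℝ} {V₂ : Matrix n n₂ ℝ} (hV : (fromCols V₁ V₂)ᵀ * fromCols V₁ V₂ = 1)
    (X : Matrix m n₁ ℝ) (Y : Matrix m n₂ ℝ) :
    ‖X * V₁ᵀ + Y * V₂ᵀ‖ ^ 2 ≤ ‖X‖ ^ 2 + ‖Y‖ ^ 2 := by
  rw [← fromCols_mul_fromRows, ← transpose_fromCols,
    l2_opNorm_mul_transpose_of_transpose_mul_self_eq_one hV]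
  exact l2_opNorm_fromCols_sq_le X Y

lemma l2_opNorm_diagonal_pow_mul_mul_diagonal_inv_pow_le {s₁ : n₁ → ℝ} {s₂ : n₂ → ℝ} {c d : ℝ}
    (hc : 0 < c) (hs₁ : ∀ i, c ≤ s₁ i) (hs₂ : ∀ j, |s₂ j| ≤ d) (q : ℕ) (M : Matrix n₂ n₁ ℝ) :
    ‖diagonal s₂ ^ (2 * q) * M * diagonal (fun i => (s₁ i ^ (2 * q))⁻¹)‖ ≤
      (d / c) ^ (2 * q) * ‖M‖ := by
  have hd : 0 ≤ d ^ (2 * q) := Even.pow_nonneg (even_two_mul q) d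
  have hleft : ‖diagonal s₂ ^ (2 * q)‖ ≤ d ^ (2 * q) := by
    rw [diagonal_pow]
    refine l2_opNorm_diagonal_le hd fun j => ?_
    rw [Pi.pow_apply, abs_pow]
    exact pow_le_pow_left₀ (abs_nonneg _) (hs₂ j) _
  have hright : ‖diagonal (fun i => (s₁ i ^ (2 * q))⁻¹)‖ ≤ (c ^ (2 * q))⁻¹ := by
    refine l2_opNorm_diagonal_le (by positivity) fun i => ?_
    have hsi : 0 < s₁ i := hc.trans_le (hs₁ i)
    rw [abs_of_pos (by positivity)]
    exact inv_anti₀ (by positivity) (pow_le_pow_left₀ hc.le (hs₁ i) _)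
  calc _ ≤ ‖diagonal s₂ ^ (2 * q)‖ * ‖M‖ * ‖diagonal (fun i => (s₁ i ^ (2 * q))⁻¹)‖ :=
        (l2_opNorm_mul _ _).trans (mul_le_mul_of_nonneg_right (l2_opNorm_mul _ _) (norm_nonneg _))
    _ ≤ d ^ (2 * q) * ‖M‖ * (c ^ (2 * q))⁻¹ :=
        mul_le_mul (mul_le_mul_of_nonneg_right hleft (norm_nonneg _)) hright (norm_nonneg _)
          (mul_nonneg hd (norm_nonneg _))
    _ = (d / c) ^ (2 * q) * ‖M‖ := by rw [div_pow]; ring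

end L2OpNorm

lemma fromRows_add_fromRows {R m₁ m₂ n : Type*} [Add R] (A₁ B₁ : Matrix m₁ n R)
    (A₂ B₂ : Matrix m₂ n R) : fromRows A₁ A₂ + fromRows B₁ B₂ = fromRows (A₁ + B₁) (A₂ + B₂) := by
  ext (i | i) j <;> rfl

lemma mul_transpose_pow_mul_eq {m p r : Type*} [Fintype m] [Fintype p] [Fintype r]
    [DecidableEq m] [DecidableEq r] {U : Matrix m r ℝ} {D : Matrix r r ℝ} {V : Matrix p r ℝ}
    {A : Matrix m p ℝ} (hU : Uᵀ * U = 1) (hV : Vᵀ * V = 1) (hD : Dᵀ = D) (hA : A = U * D * Vᵀ)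
    (q : ℕ) : (A * Aᵀ) ^ q * A = U * D ^ (2 * q + 1) * Vᵀ := by
  have hAA : A * Aᵀ = U * (D * D) * Uᵀ := by
    rw [hA, transpose_mul, transpose_mul, transpose_transpose, hD]
    simp only [Matrix.mul_assoc]
    rw [← Matrix.mul_assoc Vᵀ, hV, Matrix.one_mul]
  induction q with
  | zero => simpa using hA
  | succ q ih =>
    rw [pow_succ', Matrix.mul_assoc, ih, hAA, show 2 * (q + 1) + 1 = 2 + (2 * q + 1) by ring,
      pow_add D 2, sq]
    simp only [Matrix.mul_assoc]
    rw [← Matrix.mul_assoc Uᵀ, hU, Matrix.one_mul]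

section SubspaceIteration

variable {m p l r n₁ n₂ : Type*} [Fintype m] [Fintype p] [Fintype l] [Fintype r]
  [Fintype n₁] [Fintype n₂] [DecidableEq m] [DecidableEq r]
  [DecidableEq n₁] [DecidableEq n₂]

lemma mul_transpose_pow_mul_mul_eq_fromRows {U : Matrix m (n₁ ⊕ n₂) ℝ} (hU : Uᵀ * U = 1)
    {V₁ : Matrix p n₁ ℝ} {V₂ : Matrix p n₂ ℝ} (hV : (fromCols V₁ V₂)ᵀ * fromCols V₁ V₂ = 1)
    {s₁ : n₁ → ℝ} {s₂ : n₂ → ℝ} (hs₁ : ∀ i, s₁ i ≠ 0) {A : Matrix m p ℝ}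
    (hA : A = U * fromBlocks (diagonal s₁) 0 0 (diagonal s₂) * (fromCols V₁ V₂)ᵀ)
    {W : Matrix p l ℝ} {P : Matrix l n₁ ℝ} (hP : V₁ᵀ * W * P = 1) (q : ℕ) :
    (A * Aᵀ) ^ q * A * W * P * diagonal (fun i => (s₁ i ^ (2 * q))⁻¹) =
      U * fromRows (diagonal s₁) (diagonal s₂ ^ (2 * q) * (diagonal s₂ * (V₂ᵀ * W) * P) *
        diagonal (fun i => (s₁ i ^ (2 * q))⁻¹)) := by
  have hs₁_pow : diagonal s₁ ^ (2 * q + 1) * diagonal (fun i => (s₁ i ^ (2 * q))⁻¹) =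
      diagonal s₁ := by
    rw [diagonal_pow, diagonal_mul_diagonal]
    congr 1
    funext i
    have := hs₁ i
    rw [Pi.pow_apply, pow_succ]
    field_simp
  rw [mul_transpose_pow_mul_eq hU hV (by simp) hA q, fromBlocks_diagonal_pow, transpose_fromCols]
  simp only [Matrix.mul_assoc, fromRows_mul, fromBlocks_mul_fromRows, Matrix.zero_mul, add_zero,
    zero_add]
  congr 2
  · rw [← Matrix.mul_assoc V₁ᵀ, ← Matrix.mul_assoc (V₁ᵀ * W), hP, Matrix.one_mul, hs₁_pow]
  · simp only [pow_succ, Matrix.mul_assoc]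

/-- The columns of `U * fromRows B E` lie in the range of `Q`, so `U * fromRows (B * G) (E * G)`
can be subtracted from `A` before projecting. -/
lemma l2_opNorm_one_sub_mul_transpose_mul_le [DecidableEq p] {U : Matrix m (n₁ ⊕ n₂) ℝ}
    (hU : Uᵀ * U = 1) {Q : Matrix m r ℝ} (hQ : Qᵀ * Q = 1) {X : Matrix r n₁ ℝ}
    {B : Matrix n₁ n₁ ℝ} {E : Matrix n₂ n₁ ℝ} (hX : Q * X = U * fromRows B E)
    {G : Matrix n₁ p ℝ} {C : Matrix n₂ p ℝ} {A : Matrix m p ℝ} (hA : A = U * fromRows (B * G) C) :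
    ‖(1 - Q * Qᵀ) * A‖ ≤ ‖C - E * G‖ := by
  have hsplit : A = U * fromRows (0 : Matrix n₁ p ℝ) (C - E * G) + Q * (X * G) := by
    rw [← Matrix.mul_assoc, hX, Matrix.mul_assoc, fromRows_mul, ← Matrix.mul_add,
      fromRows_add_fromRows, zero_add, sub_add_cancel, hA]
  calc ‖(1 - Q * Qᵀ) * A‖
      = ‖(1 - Q * Qᵀ) * (U * fromRows (0 : Matrix n₁ p ℝ) (C - E * G))‖ := by
        rw [hsplit, Matrix.mul_add, ← Matrix.mul_assoc (1 - Q * Qᵀ) Q,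
          one_sub_mul_transpose_mul_eq_zero hQ, Matrix.zero_mul, add_zero]
    _ ≤ ‖1 - Q * Qᵀ‖ * ‖U * fromRows (0 : Matrix n₁ p ℝ) (C - E * G)‖ := l2_opNorm_mul _ _
    _ ≤ ‖U * fromRows (0 : Matrix n₁ p ℝ) (C - E * G)‖ :=
        mul_le_of_le_one_left (norm_nonneg _) (l2_opNorm_one_sub_mul_transpose_le_one hQ)
    _ = ‖C - E * G‖ := by
        rw [l2_opNorm_mul_of_transpose_mul_self_eq_one hU, l2_opNorm_fromRows_zero]

theorem l2_opNorm_one_sub_mul_transpose_mul_sq_le [DecidableEq p]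
    {U : Matrix m (n₁ ⊕ n₂) ℝ} (hU : Uᵀ * U = 1)
    {V₁ : Matrix p n₁ ℝ} {V₂ : Matrix p n₂ ℝ} (hV : (fromCols V₁ V₂)ᵀ * fromCols V₁ V₂ = 1)
    {s₁ : n₁ → ℝ} {s₂ : n₂ → ℝ} {c d : ℝ} (hc : 0 < c) (hs₁ : ∀ i, c ≤ s₁ i)
    (hs₂ : ∀ j, |s₂ j| ≤ d) {A : Matrix m p ℝ}
    (hA : A = U * fromBlocks (diagonal s₁) 0 0 (diagonal s₂) * (fromCols V₁ V₂)ᵀ)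
    {W : Matrix p l ℝ} {P : Matrix l n₁ ℝ} (hP : V₁ᵀ * W * P = 1)
    {Q : Matrix m r ℝ} (hQ : Qᵀ * Q = 1) {q : ℕ} {R : Matrix r l ℝ}
    (hQR : (A * Aᵀ) ^ q * A * W = Q * R) :
    ‖(1 - Q * Qᵀ) * A‖ ^ 2 ≤
      ‖diagonal s₂‖ ^ 2 + (d / c) ^ (4 * q) * ‖diagonal s₂ * (V₂ᵀ * W) * P‖ ^ 2 := by
  set E := diagonal s₂ ^ (2 * q) * (diagonal s₂ * (V₂ᵀ * W) * P) *
    diagonal (fun i => (s₁ i ^ (2 * q))⁻¹)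
  have hrange : Q * (R * P * diagonal (fun i => (s₁ i ^ (2 * q))⁻¹)) =
      U * fromRows (diagonal s₁) E := by
    rw [← Matrix.mul_assoc, ← Matrix.mul_assoc, ← hQR,
      mul_transpose_pow_mul_mul_eq_fromRows hU hV (fun i => (hc.trans_le (hs₁ i)).ne') hA hP]
  have hA_rows : A = U * fromRows (diagonal s₁ * V₁ᵀ) (diagonal s₂ * V₂ᵀ) := by
    rw [hA, transpose_fromCols, Matrix.mul_assoc, fromBlocks_mul_fromRows]
    simp
  have hE : ‖E‖ ≤ (d / c) ^ (2 * q) * ‖diagonal s₂ * (V₂ᵀ * W) * P‖ :=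
    l2_opNorm_diagonal_pow_mul_mul_diagonal_inv_pow_le hc hs₁ hs₂ q _
  calc ‖(1 - Q * Qᵀ) * A‖ ^ 2 ≤ ‖diagonal s₂ * V₂ᵀ - E * V₁ᵀ‖ ^ 2 := by
        gcongr
        exact l2_opNorm_one_sub_mul_transpose_mul_le hU hQ hrange hA_rows
    _ ≤ ‖-E‖ ^ 2 + ‖diagonal s₂‖ ^ 2 := by
        rw [sub_eq_neg_add, ← Matrix.neg_mul]
        exact l2_opNorm_sq_mul_transpose_add_mul_transpose_le hV _ _
    _ ≤ ‖diagonal s₂‖ ^ 2 + ((d / c) ^ (2 * q) * ‖diagonal s₂ * (V₂ᵀ * W) * P‖) ^ 2 := by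
        rw [norm_neg, add_comm]
        gcongr
    _ = ‖diagonal s₂‖ ^ 2 + (d / c) ^ (4 * q) * ‖diagonal s₂ * (V₂ᵀ * W) * P‖ ^ 2 := by ring

end SubspaceIteration

lemma transpose_submatrix_mul_submatrix {α m n o : Type*} [Mul α] [AddCommMonoid α]
    [Fintype m] [Fintype n] (M N : Matrix m n α) (e : o ≃ n) :
    (M.submatrix id e)ᵀ * N.submatrix id e = (Mᵀ * N).submatrix e e := by
  rw [transpose_submatrix]
  exact (submatrix_mul _ _ _ id _ Function.bijective_id).symm

lemma mulVec_surjective_of_rank_eq_card {K m n : Type*} [Field K] [Fintype m] [Fintype n]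
    {M : Matrix m n K} (h : M.rank = Fintype.card m) : Function.Surjective M.mulVec := by
  have hrange : LinearMap.range M.mulVecLin = ⊤ :=
    Submodule.eq_top_of_finrank_eq (by rw [← rank, h, Module.finrank_fintype_fun_eq_card])
  exact LinearMap.range_eq_top.1 hrange

lemma isUnit_mul_transpose_of_rank_eq_card {m n : Type*} [Fintype m] [DecidableEq m]
    [Fintype n] {M : Matrix m n ℝ} (h : M.rank = Fintype.card m) : IsUnit (M * Mᵀ) :=
  mulVec_surjective_iff_isUnit.1 <|
    mulVec_surjective_of_rank_eq_card (by rw [rank_self_mul_transpose, h])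

end Matrix

/-- With full row rank, `Mᵀ (M Mᵀ)⁻¹` satisfies the Penrose conditions, so `pinv M` is not the
junk value `0`. -/
lemma mul_pinv_eq_one_of_rank_eq {k l : ℕ} {M : Matrix (Fin k) (Fin l) ℝ} (h : M.rank = k) :
    M * pinv M = 1 := by
  have hdet : IsUnit (M * Mᵀ).det :=
    (isUnit_iff_isUnit_det _).1 (isUnit_mul_transpose_of_rank_eq_card (by simpa using h))
  set B := Mᵀ * (M * Mᵀ)⁻¹
  have hMB : M * B = 1 := by rw [← Matrix.mul_assoc, mul_nonsing_inv _ hdet]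
  have hpenrose : ∃ X : Matrix (Fin l) (Fin k) ℝ,
      M * X * M = M ∧ X * M * X = X ∧ (M * X)ᵀ = M * X ∧ (X * M)ᵀ = X * M := by
    refine ⟨B, by rw [hMB, Matrix.one_mul], by rw [Matrix.mul_assoc, hMB, Matrix.mul_one],
      by rw [hMB, transpose_one], ?_⟩
    simp only [B, transpose_mul, transpose_nonsing_inv, transpose_transpose, Matrix.mul_assoc]
  have hMXM : M * pinv M * M = M := by
    rw [pinv, dif_pos hpenrose]
    exact hpenrose.choose_spec.1
  calc M * pinv M = M * pinv M * M * B := by rw [Matrix.mul_assoc _ M, hMB, Matrix.mul_one]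
    _ = 1 := by rw [hMXM, hMB]

def finSumSubEquiv {n k : ℕ} (h : k ≤ n) : Fin k ⊕ Fin (n - k) ≃ Fin n :=
  finSumFinEquiv.trans (finCongr (Nat.add_sub_cancel' h))

lemma submatrix_finSumSubEquiv {n k : ℕ} (h : k ≤ n) (V : Matrix (Fin n) (Fin n) ℝ) :
    V.submatrix id (finSumSubEquiv h) = fromCols (colsLeft k h V) (colsRight k V) := by
  ext i (j | j) <;> rfl

lemma diagonal_submatrix_finSumSubEquiv {n k : ℕ} (h : k ≤ n) (σ : Fin n → ℝ) :
    (diagonal σ).submatrix (finSumSubEquiv h) (finSumSubEquiv h) =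
      fromBlocks (diagonal fun i => σ (Fin.castLE h i)) 0 0 (tailDiag k σ) := by
  rw [submatrix_diagonal_equiv, tailDiag, fromBlocks_diagonal]
  congr 1
  ext (i | i) <;> rfl

theorem structural_bound_general
    (m n k ℓ q : ℕ) (hkn : k < n)
    (σ : Fin n → ℝ) (hσ0 : ∀ i, 0 ≤ σ i)
    (hσmono : ∀ i j : Fin n, i ≤ j → σ j ≤ σ i)
    (hgap : σ ⟨k, hkn⟩ < σ ⟨k - 1, Nat.lt_of_le_of_lt (Nat.sub_le k 1) hkn⟩)
    (U : Matrix (Fin m) (Fin n) ℝ) (V : Matrix (Fin n) (Fin n) ℝ)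
    (hU : Uᵀ * U = 1) (hV : Vᵀ * V = 1)
    (A : Matrix (Fin m) (Fin n) ℝ) (hA : A = U * Matrix.diagonal σ * Vᵀ)
    (W : Matrix (Fin n) (Fin ℓ) ℝ)
    (hrank : ((colsLeft k hkn.le V)ᵀ * W).rank = k)
    (Q : Matrix (Fin m) (Fin ℓ) ℝ) (hQ : Qᵀ * Q = 1)
    (hQR : ∃ R : Matrix (Fin ℓ) (Fin ℓ) ℝ, (A * Aᵀ) ^ q * A * W = Q * R) :
    spec ((1 - Q * Qᵀ) * A) ^ 2 ≤
      spec (tailDiag k σ) ^ 2 +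
        (σ ⟨k, hkn⟩ / σ ⟨k - 1, Nat.lt_of_le_of_lt (Nat.sub_le k 1) hkn⟩) ^ (4 * q) *
          spec (tailDiag k σ * ((colsRight k V)ᵀ * W) * pinv ((colsLeft k hkn.le V)ᵀ * W)) ^ 2 := by
  obtain ⟨R, hR⟩ := hQR
  set e := finSumSubEquiv hkn.le
  have hU_split : (U.submatrix id e)ᵀ * U.submatrix id e = 1 := by
    rw [transpose_submatrix_mul_submatrix, hU, submatrix_one_equiv]
  have hV_split : (fromCols (colsLeft k hkn.le V) (colsRight k V))ᵀ *
      fromCols (colsLeft k hkn.le V) (colsRight k V) = 1 := by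
    rw [← submatrix_finSumSubEquiv, transpose_submatrix_mul_submatrix, hV, submatrix_one_equiv]
  have hA_split : A = U.submatrix id e * fromBlocks (diagonal fun i => σ (Fin.castLE hkn.le i)) 0 0
      (tailDiag k σ) * (fromCols (colsLeft k hkn.le V) (colsRight k V))ᵀ := by
    rw [← diagonal_submatrix_finSumSubEquiv, ← submatrix_finSumSubEquiv, transpose_submatrix,
      submatrix_mul_equiv, submatrix_mul_equiv, submatrix_id_id, hA]
  have hhead : ∀ i : Fin k,
      σ ⟨k - 1, Nat.lt_of_le_of_lt (Nat.sub_le k 1) hkn⟩ ≤ σ (Fin.castLE hkn.le i) :=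
    fun i => hσmono _ _ (by simp only [Fin.le_def, Fin.val_castLE]; omega)
  have htail : ∀ j : Fin (n - k), |σ ⟨k + j, by omega⟩| ≤ σ ⟨k, hkn⟩ := fun j => by
    rw [abs_of_nonneg (hσ0 _)]
    exact hσmono _ _ (by simp only [Fin.le_def]; omega)
  simp only [spec_eq_l2_opNorm]
  exact l2_opNorm_one_sub_mul_transpose_mul_sq_le hU_split hV_split ((hσ0 _).trans_lt hgap) hhead
    htail hA_split (mul_pinv_eq_one_of_rank_eq hrank) hQ hR

/-- **Structural bound for randomized subspace iteration.**
If `A = U Σ Vᵀ` is an SVD of `A ∈ ℝ^{m×n}` (`m ≥ n`), `Ω ∈ ℝ^{n×ℓ}` (`k ≤ ℓ ≤ n`) is such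
that `Ω̂₁ = V_kᵀΩ` has full row rank, and `Q` is the orthonormal factor of a thin QR
factorization of `Y = (AAᵀ)^q A Ω`, then
`‖(I − QQᵀ)A‖₂² ≤ ‖Σ⊥‖₂² + γ_k^{4q} ‖Σ⊥ Ω̂₂ Ω̂₁†‖₂²`. -/
theorem structural_bound
    (m n k ℓ q : ℕ) (hmn : n ≤ m) (hk0 : 0 < k) (hkn : k < n) (hkl : k ≤ ℓ) (hln : ℓ ≤ n)
    (σ : Fin n → ℝ) (hσ0 : ∀ i, 0 ≤ σ i)
    (hσmono : ∀ i j : Fin n, i ≤ j → σ j ≤ σ i)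
    (hgap : σ ⟨k, hkn⟩ < σ ⟨k - 1, Nat.lt_of_le_of_lt (Nat.sub_le k 1) hkn⟩)
    (U : Matrix (Fin m) (Fin n) ℝ) (V : Matrix (Fin n) (Fin n) ℝ)
    (hU : Uᵀ * U = 1) (hV : Vᵀ * V = 1)
    (A : Matrix (Fin m) (Fin n) ℝ) (hA : A = U * Matrix.diagonal σ * Vᵀ)
    (W : Matrix (Fin n) (Fin ℓ) ℝ)
    (hrank : ((colsLeft k hkn.le V)ᵀ * W).rank = k)
    (Q : Matrix (Fin m) (Fin ℓ) ℝ) (hQ : Qᵀ * Q = 1)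
    (hQR : ∃ R : Matrix (Fin ℓ) (Fin ℓ) ℝ, (A * Aᵀ) ^ q * A * W = Q * R) :
    spec ((1 - Q * Qᵀ) * A) ^ 2 ≤
      spec (tailDiag k σ) ^ 2 +
        (σ ⟨k, hkn⟩ / σ ⟨k - 1, Nat.lt_of_le_of_lt (Nat.sub_le k 1) hkn⟩) ^ (4 * q) *
          spec (tailDiag k σ * ((colsRight k V)ᵀ * W) * pinv ((colsLeft k hkn.le V)ᵀ * W)) ^ 2 :=
  structural_bound_general m n k ℓ q hkn σ hσ0 hσmono hgap U V hU hV A hA W hrank Q hQ hQR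

end
end

section
/- Let Ω ∈ ℝ^{n×ℓ} be a random matrix whose columns are independent isotropic random vectors, and set Z = Σ⊥ Ω̂₂ where Ω̂₂ = V⊥ᵀΩ. Then E[ ‖ (1/ℓ) Z Zᵀ − Σ⊥Σ⊥ᵀ ‖₂ ] ≤ 2√2 · ‖Σ⊥‖_F². -/
open MeasureTheory Matrix ProbabilityTheory

noncomputable section

/-- Frobenius norm of a real matrix. -/
def frob {m n : ℕ} (A : Matrix (Fin m) (Fin n) ℝ) : ℝ :=
  Real.sqrt (∑ i, ∑ j, (A i j) ^ 2)

/-- Stable rank `sr(A) = ‖A‖_F² / ‖A‖₂²`. -/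
def srank {m n : ℕ} (A : Matrix (Fin m) (Fin n) ℝ) : ℝ :=
  frob A ^ 2 / spec A ^ 2

/-- Euclidean norm of a vector. -/
def vnorm {d : ℕ} (v : Fin d → ℝ) : ℝ := Real.sqrt (∑ i, v i ^ 2)

/-- The sub-Gaussian norm of `X` is at most `K`:
`‖X‖_{ψ₂} = inf {t > 0 | E exp(X²/t²) ≤ 2} ≤ K`. -/
def SubGaussNormLE {Ω : Type} [MeasurableSpace Ω] (μ : Measure Ω) (X : Ω → ℝ) (K : ℝ) : Prop :=
  ∀ t : ℝ, K < t → ∫ ω, Real.exp ((X ω) ^ 2 / t ^ 2) ∂μ ≤ 2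

/-- The sub-Gaussian norm of the random vector `x` is at most `K`:
`sup_{‖z‖=1} ‖⟨x,z⟩‖_{ψ₂} ≤ K`. -/
def VecSubGaussNormLE {Ω : Type} [MeasurableSpace Ω] (μ : Measure Ω) {d : ℕ}
    (x : Ω → Fin d → ℝ) (K : ℝ) : Prop :=
  ∀ z : Fin d → ℝ, (∑ i, z i ^ 2) = 1 → SubGaussNormLE μ (fun ω => ∑ i, x ω i * z i) K

/-- A random vector is isotropic: `E[x] = 0` and `E[x xᵀ] = I`. -/
def Isotropic {Ω : Type} [MeasurableSpace Ω] (μ : Measure Ω) {d : ℕ}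
    (x : Ω → Fin d → ℝ) : Prop :=
  (∀ i, ∫ ω, x ω i ∂μ = 0) ∧
  (∀ i j, ∫ ω, x ω i * x ω j ∂μ = if i = j then 1 else 0)

/-!
The spectral norm is dominated by the Frobenius norm, so the triangle inequality and
submultiplicativity give `‖ℓ⁻¹ Z Zᵀ - Σ⊥ Σ⊥ᵀ‖₂ ≤ ℓ⁻¹ ‖Z‖_F² + ‖Σ⊥‖_F²` pointwise. Writing
`Z = C Ω` with `C = Σ⊥ V⊥ᵀ`, isotropy of each column gives `E ‖Z‖_F² = ℓ ‖C‖_F²`, and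
`‖C‖_F = ‖Σ⊥‖_F` because `V⊥` has orthonormal columns. Hence the expectation is at most
`2 ‖Σ⊥‖_F² ≤ 2√2 ‖Σ⊥‖_F²`.
-/

attribute [local instance] Matrix.frobeniusSeminormedAddCommGroup Matrix.frobeniusNormSMulClass

section MatrixNorms

variable {m n p q : ℕ}

lemma frob_eq_norm (A : Matrix (Fin m) (Fin n) ℝ) : frob A = ‖A‖ := by
  simp only [frob, frobenius_norm_def, Real.sqrt_eq_rpow, Real.norm_eq_abs, Real.rpow_two, sq_abs]

lemma frob_sq (A : Matrix (Fin m) (Fin n) ℝ) : frob A ^ 2 = ∑ i, ∑ j, A i j ^ 2 :=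
  Real.sq_sqrt (by positivity)

lemma frob_sq_eq_trace (A : Matrix (Fin m) (Fin n) ℝ) : frob A ^ 2 = trace (A * Aᵀ) := by
  rw [frob_sq]
  simp [trace, mul_apply, sq]

lemma frob_mul_transpose_of_orthonormal (B : Matrix (Fin m) (Fin n) ℝ)
    {Q : Matrix (Fin p) (Fin n) ℝ} (hQ : Qᵀ * Q = 1) : frob (B * Qᵀ) = frob B := by
  have h : frob (B * Qᵀ) ^ 2 = frob B ^ 2 := by
    rw [frob_sq_eq_trace, frob_sq_eq_trace, transpose_mul, transpose_transpose,
      Matrix.mul_assoc, ← Matrix.mul_assoc Qᵀ, hQ, Matrix.one_mul]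
  simpa only [frob_eq_norm, sq_eq_sq₀ (norm_nonneg _) (norm_nonneg _)] using h

lemma spec_le_frob (A : Matrix (Fin m) (Fin n) ℝ) : spec A ≤ frob A := by
  refine ContinuousLinearMap.opNorm_le_bound _ (by rw [frob_eq_norm]; positivity) fun x => ?_
  rw [LinearMap.coe_toContinuousLinearMap', toLpLin_apply, frob_eq_norm,
    ← frobenius_norm_replicateCol (ι := Fin 1), replicateCol_mulVec,
    ← WithLp.toLp_ofLp (p := 2) x, ← frobenius_norm_replicateCol (ι := Fin 1)]
  exact frobenius_norm_mul _ _

lemma spec_smul_mul_transpose_sub_le {c : ℝ} (hc : 0 ≤ c) (B : Matrix (Fin m) (Fin p) ℝ)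
    (D : Matrix (Fin m) (Fin q) ℝ) :
    spec (c • (B * Bᵀ) - D * Dᵀ) ≤ c * frob B ^ 2 + frob D ^ 2 := by
  refine (spec_le_frob _).trans ?_
  simp only [frob_eq_norm]
  calc ‖c • (B * Bᵀ) - D * Dᵀ‖
      ≤ ‖c • (B * Bᵀ)‖ + ‖D * Dᵀ‖ := norm_sub_le _ _
    _ ≤ c * (‖B‖ * ‖Bᵀ‖) + ‖D‖ * ‖Dᵀ‖ := by
        rw [norm_smul, Real.norm_of_nonneg hc]
        gcongr <;> exact frobenius_norm_mul _ _
    _ = c * ‖B‖ ^ 2 + ‖D‖ ^ 2 := by rw [frobenius_norm_transpose, frobenius_norm_transpose]; ring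

end MatrixNorms

lemma colsRight_transpose_mul_self {n : ℕ} (k : ℕ) {V : Matrix (Fin n) (Fin n) ℝ}
    (hV : Vᵀ * V = 1) : (colsRight k V)ᵀ * colsRight k V = 1 := by
  have hinj : Function.Injective fun j : Fin (n - k) => (⟨k + j.1, by omega⟩ : Fin n) :=
    fun i j h => Fin.ext (by simpa using h)
  rw [show colsRight k V = V.submatrix id _ from rfl, transpose_submatrix,
    ← submatrix_mul _ _ _ id _ Function.bijective_id, hV, submatrix_one _ hinj]

section Isotropic

variable {Ω : Type} [MeasurableSpace Ω] {μ : Measure Ω} {d : ℕ} {x : Ω → Fin d → ℝ}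

lemma Isotropic.memLp_two (hx : Isotropic μ x)
    (hmeas : ∀ i, AEStronglyMeasurable (fun ω => x ω i) μ) (i : Fin d) :
    MemLp (fun ω => x ω i) 2 μ := by
  refine (memLp_two_iff_integrable_sq (hmeas i)).2 ?_
  by_contra h
  have h1 := hx.2 i i
  simp only [← sq, integral_undef h] at h1
  simp at h1

lemma Isotropic.integral_dotProduct_sq (hx : Isotropic μ x)
    (hmeas : ∀ i, AEStronglyMeasurable (fun ω => x ω i) μ) (c : Fin d → ℝ) :
    Integrable (fun ω => (c ⬝ᵥ x ω) ^ 2) μ ∧ ∫ ω, (c ⬝ᵥ x ω) ^ 2 ∂μ = c ⬝ᵥ c := by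
  have hprod : ∀ i j, Integrable (fun ω => c i * c j * (x ω i * x ω j)) μ := fun i j =>
    ((hx.memLp_two hmeas i).integrable_mul (hx.memLp_two hmeas j)).const_mul _
  have hexpand : ∀ ω, (c ⬝ᵥ x ω) ^ 2 = ∑ i, ∑ j, c i * c j * (x ω i * x ω j) := fun ω => by
    simp only [dotProduct, sq, Finset.sum_mul_sum]
    exact Finset.sum_congr rfl fun _ _ => Finset.sum_congr rfl fun _ _ => by ring
  simp only [hexpand]
  refine ⟨integrable_finsetSum _ fun i _ => integrable_finsetSum _ fun j _ => hprod i j, ?_⟩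
  rw [integral_finsetSum _ fun i _ => integrable_finsetSum _ fun j _ => hprod i j]
  simp_rw [integral_finsetSum _ fun j _ => hprod _ j, integral_const_mul, hx.2]
  simp [dotProduct]

lemma integral_frob_mul_sq {p ℓ : ℕ} (C : Matrix (Fin p) (Fin d) ℝ)
    {W : Ω → Matrix (Fin d) (Fin ℓ) ℝ} (hmeas : ∀ i j, AEStronglyMeasurable (fun ω => W ω i j) μ)
    (hiso : ∀ j, Isotropic μ fun ω i => W ω i j) :
    Integrable (fun ω => frob (C * W ω) ^ 2) μ ∧ ∫ ω, frob (C * W ω) ^ 2 ∂μ = ℓ * frob C ^ 2 := by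
  have hcol a j := (hiso j).integral_dotProduct_sq (hmeas · j) (C a)
  simp only [frob_sq, mul_apply']
  refine ⟨integrable_finsetSum _ fun a _ => integrable_finsetSum _ fun j _ => (hcol a j).1, ?_⟩
  rw [integral_finsetSum _ fun a _ => integrable_finsetSum _ fun j _ => (hcol a j).1]
  simp_rw [integral_finsetSum _ fun j _ => (hcol _ j).1, (hcol _ _).2]
  simp [Finset.mul_sum, dotProduct, sq]

end Isotropic

theorem expected_sample_covariance_error_general
    (n k ℓ : ℕ)
    (σ : Fin n → ℝ)
    (V : Matrix (Fin n) (Fin n) ℝ)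
    (hV : Vᵀ * V = 1)
    (Ω₀ : Type) [MeasurableSpace Ω₀] (μ : Measure Ω₀) [IsProbabilityMeasure μ]
    (W : Ω₀ → Matrix (Fin n) (Fin ℓ) ℝ)
    (hWmeas : ∀ i j, Measurable fun ω => W ω i j)
    (hWiso : ∀ j : Fin ℓ, Isotropic μ fun ω (i : Fin n) => W ω i j)
    :
    ∫ ω, spec ((ℓ : ℝ)⁻¹ •
        ((tailDiag k σ * ((colsRight k V)ᵀ * W ω)) *
          (tailDiag k σ * ((colsRight k V)ᵀ * W ω))ᵀ) -
        tailDiag k σ * (tailDiag k σ)ᵀ) ∂μ ≤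
      2 * Real.sqrt 2 * frob (tailDiag k σ) ^ 2 := by
  set D := tailDiag k σ
  set Q := colsRight k V
  set C := D * Qᵀ
  have hC : frob C = frob D :=
    frob_mul_transpose_of_orthonormal D (colsRight_transpose_mul_self k hV)
  obtain ⟨hint, hval⟩ :=
    integral_frob_mul_sq C (fun i j => (hWmeas i j).aestronglyMeasurable) hWiso
  have hbound : ∀ ω, spec ((ℓ : ℝ)⁻¹ • ((D * (Qᵀ * W ω)) * (D * (Qᵀ * W ω))ᵀ) - D * Dᵀ) ≤
      (ℓ : ℝ)⁻¹ * frob (C * W ω) ^ 2 + frob D ^ 2 := fun ω => by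
    rw [← Matrix.mul_assoc]
    exact spec_smul_mul_transpose_sub_le (by positivity) _ _
  -- not `= 1`: the cast inverse vanishes when `ℓ = 0`
  have hinv : (ℓ : ℝ)⁻¹ * ℓ ≤ 1 := inv_mul_le_one_of_le₀ le_rfl (Nat.cast_nonneg ℓ)
  calc _ ≤ ∫ ω, ((ℓ : ℝ)⁻¹ * frob (C * W ω) ^ 2 + frob D ^ 2) ∂μ :=
        integral_mono_of_nonneg (ae_of_all _ fun _ => norm_nonneg _)
          ((hint.const_mul _).add (integrable_const _)) (ae_of_all _ hbound)
    _ = (ℓ : ℝ)⁻¹ * ℓ * frob D ^ 2 + frob D ^ 2 := by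
        rw [integral_add (hint.const_mul _) (integrable_const _), integral_const_mul, hval, hC,
          integral_const, probReal_univ, one_smul, mul_assoc]
    _ ≤ 2 * frob D ^ 2 := by nlinarith [sq_nonneg (frob D)]
    _ ≤ 2 * Real.sqrt 2 * frob D ^ 2 := by
        gcongr
        exact le_mul_of_one_le_right zero_le_two (Real.one_le_sqrt.2 one_le_two)

/-- **Lemma (expected sample covariance error).**
If the columns of `Ω ∈ ℝ^{n×ℓ}` are independent isotropic random vectors and
`Z = Σ⊥Ω̂₂`, then `E‖(1/ℓ)ZZᵀ − Σ⊥Σ⊥ᵀ‖₂ ≤ 2√2 ‖Σ⊥‖_F²`. -/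
theorem expected_sample_covariance_error
    (m n k ℓ : ℕ) (hmn : n ≤ m) (hk0 : 0 < k) (hkn : k < n) (hℓ : 0 < ℓ)
    (σ : Fin n → ℝ) (hσ0 : ∀ i, 0 ≤ σ i)
    (hσmono : ∀ i j : Fin n, i ≤ j → σ j ≤ σ i)
    (U : Matrix (Fin m) (Fin n) ℝ) (V : Matrix (Fin n) (Fin n) ℝ)
    (hU : Uᵀ * U = 1) (hV : Vᵀ * V = 1)
    (A : Matrix (Fin m) (Fin n) ℝ) (hA : A = U * Matrix.diagonal σ * Vᵀ)
    (hperp : tailDiag k σ ≠ 0)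
    (Ω₀ : Type) [MeasurableSpace Ω₀] (μ : Measure Ω₀) [IsProbabilityMeasure μ]
    (W : Ω₀ → Matrix (Fin n) (Fin ℓ) ℝ)
    (hWmeas : ∀ i j, Measurable fun ω => W ω i j)
    (hWindep : iIndepFun
      (fun (j : Fin ℓ) ω (i : Fin n) => W ω i j) μ)
    (hWiso : ∀ j : Fin ℓ, Isotropic μ fun ω (i : Fin n) => W ω i j)
    :
    ∫ ω, spec ((ℓ : ℝ)⁻¹ •
        ((tailDiag k σ * ((colsRight k V)ᵀ * W ω)) *
          (tailDiag k σ * ((colsRight k V)ᵀ * W ω))ᵀ) -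
        tailDiag k σ * (tailDiag k σ)ᵀ) ∂μ ≤
      2 * Real.sqrt 2 * frob (tailDiag k σ) ^ 2 :=
  expected_sample_covariance_error_general n k ℓ σ V hV Ω₀ μ W hWmeas hWiso

end
end
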